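/- Let X be a semi-coarse space, suppose A, B ⊆ X well-split X, and let f : ℤ₁ → X be a bornologous map each of whose tails is contained in A or in B (the two tails possibly in different sets). Then there exist bornologous maps f₁,…,fₙ : ℤ₁ → X such that fᵢ(ℤ) ⊆ A or fᵢ(ℤ) ⊆ B for each i, the right tail of fᵢ equals the left tail of f_{i+1} for each i, and [f] = [f₁] ⋆ [f₂] ⋆ ⋯ ⋆ [fₙ], i.e. (f) ≃ (f₁,…,fₙ) as strings. -/

import Mathlib

open Set

universe u v w

/-- A semi-coarse structure on a set `X`: a collection of subsets of `X × X` containing the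
diagonal, closed under subsets, finite unions, and inverses. -/
def IsSemiCoarseStructure {X : Type u} (V : Set (Set (X × X))) : Prop :=
  Set.diagonal X ∈ V ∧
  (∀ A B : Set (X × X), B ∈ V → A ⊆ B → A ∈ V) ∧
  (∀ A B : Set (X × X), A ∈ V → B ∈ V → A ∪ B ∈ V) ∧
  (∀ A : Set (X × X), A ∈ V → Prod.swap '' A ∈ V)

/-- A map `f : (X,𝒱) → (Y,𝒲)` is bornologous if `(f × f)(V) ∈ 𝒲` for every `V ∈ 𝒱`. -/
def Bornologous {X : Type u} {Y : Type v} (V : Set (Set (X × X))) (W : Set (Set (Y × Y)))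
    (f : X → Y) : Prop :=
  ∀ A ∈ V, (fun p : X × X => (f p.1, f p.2)) '' A ∈ W

/-- `ℤ₁`: the semi-coarse structure on `ℤ` whose controlled sets are exactly the subsets of
`{(i, i+j) : i ∈ ℤ, j ∈ {-1,0,1}}`. -/
def Z1 : Set (Set (ℤ × ℤ)) :=
  {A | A ⊆ {p : ℤ × ℤ | |p.2 - p.1| ≤ 1}}

/-- The subspace semi-coarse structure on a subset `s ⊆ X`, viewed on the subtype `s`:
a set is controlled iff its image in `X × X` is controlled. -/
def subStruct {X : Type u} (V : Set (Set (X × X))) (s : Set X) : Set (Set (s × s)) :=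
  {A | (fun p : s × s => ((p.1 : X), (p.2 : X))) '' A ∈ V}

/-- The subspace semi-coarse structure `𝒱_s := {V ∩ (s × s) : V ∈ 𝒱}`, viewed inside `X × X`. -/
def subFamily {X : Type u} (V : Set (Set (X × X))) (s : Set X) : Set (Set (X × X)) :=
  {W | ∃ V' ∈ V, W = V' ∩ (s ×ˢ s)}

/-- The product semi-coarse structure: `U` is controlled iff `U ⊆ A ⊠ B` for controlled `A, B`. -/
def prodStruct {X : Type u} {Y : Type v} (V : Set (Set (X × X))) (W : Set (Set (Y × Y))) :
    Set (Set ((X × Y) × (X × Y))) :=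
  {U | ∃ A ∈ V, ∃ B ∈ W,
    U ⊆ {p : (X × Y) × (X × Y) | (p.1.1, p.2.1) ∈ A ∧ (p.1.2, p.2.2) ∈ B}}

/-- The quotient semi-coarse structure inductively generated by `q`:
`𝒱_q := {(q × q)(V) : V ∈ 𝒱}`. -/
def quotStruct {X : Type u} {Y : Type v} (V : Set (Set (X × X))) (q : X → Y) :
    Set (Set (Y × Y)) :=
  {W | ∃ V' ∈ V, W = (fun p : X × X => (q p.1, q p.2)) '' V'}

/-- The disjoint-union semi-coarse structure on `Σ l, Xl l`: controlled sets are the finite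
disjoint unions of controlled sets of the summands. -/
def djStruct {Λ : Type u} {Xl : Λ → Type v} (Vl : ∀ l : Λ, Set (Set (Xl l × Xl l))) :
    Set (Set ((Σ l : Λ, Xl l) × (Σ l : Λ, Xl l))) :=
  {U | ∃ s : Finset Λ, ∃ C : ∀ l : Λ, Set (Xl l × Xl l),
        (∀ l : Λ, C l ∈ Vl l) ∧
        U = ⋃ l ∈ s, (fun p : Xl l × Xl l =>
              ((⟨l, p.1⟩ : Σ l : Λ, Xl l), (⟨l, p.2⟩ : Σ l : Λ, Xl l))) '' C l}

/-- The disjoint-union semi-coarse structure on `A ⊕ B`. -/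
def djStruct2 {A : Type u} {B : Type u} (VA : Set (Set (A × A))) (VB : Set (Set (B × B))) :
    Set (Set ((A ⊕ B) × (A ⊕ B))) :=
  {U | ∃ CA ∈ VA, ∃ CB ∈ VB,
    U = (fun p : A × A => ((Sum.inl p.1 : A ⊕ B), (Sum.inl p.2 : A ⊕ B))) '' CA ∪
        (fun p : B × B => ((Sum.inr p.1 : A ⊕ B), (Sum.inr p.2 : A ⊕ B))) '' CB}

/-- The relation on `A ⊕ B` identifying `inl (f c)` with `inr (g c)`. -/
def pushRel {A : Type u} {B : Type u} {C : Type u} (f : C → A) (g : C → B) :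
    (A ⊕ B) → (A ⊕ B) → Prop :=
  fun x y => ∃ c : C, x = Sum.inl (f c) ∧ y = Sum.inr (g c)

/-- The semi-coarse structure `𝒱_{A ⊔_{A∩B} B}` of the pushout of the inclusions
`A∩B → A` and `A∩B → B`, with underlying set identified inside `X`: the controlled sets are
exactly the unions `V₁ ∪ V₂` with `V₁, V₂` controlled, `V₁ ⊆ A × A`, `V₂ ⊆ B × B`. -/
def pushoutStruct {X : Type u} (V : Set (Set (X × X))) (A B : Set X) : Set (Set (X × X)) :=
  {W | ∃ V₁ ∈ V, ∃ V₂ ∈ V, V₁ ⊆ A ×ˢ A ∧ V₂ ⊆ B ×ˢ B ∧ W = V₁ ∪ V₂}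

/-- `x` and `y` are joined by a bornologous path `γ : {0,…,n} → Y` (with `{0,…,n} ⊆ ℤ₁`). -/
def SCReachable {Y : Type u} (W : Set (Set (Y × Y))) (x y : Y) : Prop :=
  ∃ n : ℕ, ∃ γ : (Set.Icc (0:ℤ) (n:ℤ)) → Y,
    Bornologous (subStruct Z1 (Set.Icc (0:ℤ) (n:ℤ))) W γ ∧
    γ ⟨0, Set.mem_Icc.mpr ⟨le_rfl, Int.natCast_nonneg n⟩⟩ = x ∧
    γ ⟨(n:ℤ), Set.mem_Icc.mpr ⟨Int.natCast_nonneg n, le_rfl⟩⟩ = y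

/-- A semi-coarse space is connected if any two points are joined by a bornologous path. -/
def SCConnected {Y : Type u} (W : Set (Set (Y × Y))) : Prop :=
  ∀ x y : Y, SCReachable W x y

/-- The three-point interval `{0,1,2} ⊆ ℤ`. -/
def I2 : Set ℤ := Set.Icc 0 2

def i2p0 : I2 := ⟨0, Set.mem_Icc.mpr (by norm_num)⟩
def i2p1 : I2 := ⟨1, Set.mem_Icc.mpr (by norm_num)⟩
def i2p2 : I2 := ⟨2, Set.mem_Icc.mpr (by norm_num)⟩

/-- A bornologous path `{0,1,2} → X` with respect to a structure `P` on `X`. -/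
def ShortPathIn {X : Type u} (P : Set (Set (X × X))) (γ : I2 → X) : Prop :=
  Bornologous (subStruct Z1 I2) P γ

/-- `A, B` well-split `X`. -/
def WellSplit {X : Type u} (V : Set (Set (X × X))) (A B : Set X) : Prop :=
  A.Nonempty ∧ B.Nonempty ∧ A ∪ B = Set.univ ∧
  ∀ x y y' : X,
    ({(x, y), (x, y')} : Set (X × X)) ∈ V →
    ({(x, y), (x, y')} : Set (X × X)) ∉ pushoutStruct V A B →
    ({(y, y')} : Set (X × X)) ∈ pushoutStruct V A B →
    ((∃ γ γ' : I2 → X,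
        ShortPathIn (pushoutStruct V A B) γ ∧ ShortPathIn (pushoutStruct V A B) γ' ∧
        γ i2p0 = x ∧ γ' i2p0 = x ∧ γ i2p2 = y ∧ γ' i2p2 = y' ∧ γ i2p1 = γ' i2p1) ∧
      SCConnected (subStruct V {m : X | ∃ γ : I2 → X,
        ShortPathIn (pushoutStruct V A B) γ ∧ γ i2p0 = x ∧ γ i2p2 = y ∧ γ i2p1 = m}))

/-- Semi-coarse homotopy of two maps `f g : (X,𝒱) → (Y,𝒲)`. -/
def SCHomotopic {X : Type u} {Y : Type v} (V : Set (Set (X × X))) (W : Set (Set (Y × Y)))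
    (f g : X → Y) : Prop :=
  ∃ H : X × ℤ → Y, Bornologous (prodStruct V Z1) W H ∧
    (∃ M : ℤ, ∀ x : X, ∀ k : ℤ, k ≤ M → H (x, k) = f x) ∧
    (∃ N : ℤ, ∀ x : X, ∀ k : ℤ, N ≤ k → H (x, k) = g x)

/-- A symmetric map `ℤ → X`. -/
def SymMap {X : Type u} (f : ℤ → X) : Prop := ∀ z : ℤ, f z = f (-z)

/-- The opposite direction of `f : ℤ₁ → X`. -/
def opp {X : Type u} (f : ℤ → X) : ℤ → X := fun z => f (-z)

/-- The nonnegative ray `[0,∞) ⊆ ℤ`. -/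
def NonnegAxis : Set ℤ := {z : ℤ | 0 ≤ z}

/-- The linking condition on consecutive members of a string: there are shifts `N, M` such that
`z ↦ f (z + N)` restricted to `[0,∞)` is semi-coarse homotopic to the opposite of
`z ↦ g (z + M)` restricted to `[0,∞)`. -/
def tailsLink {X : Type u} (V : Set (Set (X × X))) (f g : ℤ → X) : Prop :=
  ∃ N M : ℤ, SCHomotopic (subStruct Z1 NonnegAxis) V
    (fun z : NonnegAxis => f ((z : ℤ) + N)) (fun z : NonnegAxis => g (-(z : ℤ) + M))

/-- `L` is a string in `X` from `⟨f⟩_∞` to `⟨g⟩_∞`. -/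
def IsString {X : Type u} (V : Set (Set (X × X))) (f g : ℤ → X) (L : List (ℤ → X)) : Prop :=
  L ≠ [] ∧ SymMap f ∧ SymMap g ∧ Bornologous Z1 V f ∧ Bornologous Z1 V g ∧
  (∀ u ∈ L, Bornologous Z1 V u) ∧ List.Chain' (tailsLink V) (f :: L ++ [g])

/-- Two maps `ℤ → X` are eventually equal. -/
def EventuallyEqual {X : Type u} (f g : ℤ → X) : Prop :=
  ∃ N M : ℕ, ∀ k : ℕ, f ((N : ℤ) + (k : ℤ)) = g ((M : ℤ) + (k : ℤ))

/-- The generating relation for the class `⟨f⟩_∞`: symmetric bornologous maps which are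
eventually equal or semi-coarse homotopic. -/
def InfRel {X : Type u} (V : Set (Set (X × X))) (f g : ℤ → X) : Prop :=
  SymMap f ∧ SymMap g ∧ Bornologous Z1 V f ∧ Bornologous Z1 V g ∧
  (EventuallyEqual f g ∨ SCHomotopic Z1 V f g)

/-- `g ∈ ⟨f⟩_∞`: the equivalence generated by eventual equality and semi-coarse homotopy of
symmetric maps. -/
def InfEqv {X : Type u} (V : Set (Set (X × X))) (f g : ℤ → X) : Prop :=
  Relation.ReflTransGen (fun a b => InfRel V a b ∨ InfRel V b a) f g

/-- `g` is periodic on the subset `s ⊆ ℤ`. -/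
def PeriodicOn {X : Type u} (g : ℤ → X) (s : Set ℤ) : Prop :=
  ∃ p : ℤ, 0 < p ∧ ∀ z ∈ s, g (z + p) = g z

/-- The restriction of `g` to `s` is semi-coarse homotopic to a constant map. -/
def HomotopicToConstOn {X : Type u} (V : Set (Set (X × X))) (g : ℤ → X) (s : Set ℤ) : Prop :=
  ∃ c : X, SCHomotopic (subStruct Z1 s) V (fun z : s => g (z : ℤ)) (fun _ : s => c)

/-- The periodicity-of-tails condition at the point `j`. -/
def TailCondAt {X : Type u} (V : Set (Set (X × X))) (g : ℤ → X) (j : ℤ) : Prop :=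
  ((PeriodicOn g {z : ℤ | j - 1 ≤ z} ∧ ∃ k : ℤ, 1 < k ∧ PeriodicOn g {z : ℤ | j - k ≤ z}) →
      HomotopicToConstOn V g {z : ℤ | j ≤ z}) ∧
  ((PeriodicOn g {z : ℤ | z ≤ j + 1} ∧ ∃ k : ℤ, 1 < k ∧ PeriodicOn g {z : ℤ | z ≤ j + k}) →
      HomotopicToConstOn V g {z : ℤ | z ≤ j})

/-- The periodicity-of-tails condition (at every point). -/
def TailCond {X : Type u} (V : Set (Set (X × X))) (g : ℤ → X) : Prop :=
  ∀ j : ℤ, TailCondAt V g j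

/-- `F →_{d_op(i)} F'`: delete two consecutive opposite maps. -/
def DelOp {X : Type u} (F F' : List (ℤ → X)) : Prop :=
  ∃ (P S : List (ℤ → X)) (u v : ℤ → X) (N : ℤ),
    F = P ++ u :: v :: S ∧ F' = P ++ S ∧ 3 ≤ F.length ∧
    ∀ z : ℤ, u z = v (-(z + N))

/-- `F →_{m(i,j)} F'`: merge two consecutive maps with equal constant adjacent tails. -/
def MergeRel {X : Type u} (V : Set (Set (X × X))) (F F' : List (ℤ → X)) : Prop :=
  ∃ (P S : List (ℤ → X)) (u v g : ℤ → X) (x₀ : X) (N M j : ℤ),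
    F = P ++ u :: v :: S ∧ F' = P ++ g :: S ∧
    N ≤ j ∧ j ≤ M ∧
    (∀ x : ℤ, N ≤ x → u x = x₀) ∧ (∀ y : ℤ, y ≤ M → v y = x₀) ∧
    (∀ x : ℤ, g x = if x ≤ j then u x else v x) ∧
    TailCondAt V g j

/-- One step of the relation generating `≃_S`, in either direction. -/
def StepS {X : Type u} (V : Set (Set (X × X))) (F F' : List (ℤ → X)) : Prop :=
  DelOp F F' ∨ DelOp F' F ∨ MergeRel V F F' ∨ MergeRel V F' F

/-- The relation `≃_S` on strings. -/
def SimS {X : Type u} (V : Set (Set (X × X))) : List (ℤ → X) → List (ℤ → X) → Prop :=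
  Relation.ReflTransGen (StepS V)

/-- The opposite direction `F̄` of a string `F`. -/
def oppStr {X : Type u} (F : List (ℤ → X)) : List (ℤ → X) := (F.map opp).reverse

/-- `f →_{d(z₀)} g`: `g` is the result of deleting `z₀` in `f`. -/
def DeleteRel {X : Type u} (V : Set (Set (X × X))) (z₀ : ℤ) (f g : ℤ → X) : Prop :=
  Bornologous Z1 V f ∧ Bornologous Z1 V g ∧
  (∀ z : ℤ, z < z₀ → g z = f z) ∧ (∀ z : ℤ, z₀ ≤ z → g z = f (z + 1)) ∧
  TailCond V g

/-- `f →_{a(z₀,x₀)} g`: `g` is the result of adding `x₀` at `z₀` in `f`. -/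
def AddRel {X : Type u} (V : Set (Set (X × X))) (z₀ : ℤ) (x₀ : X) (f g : ℤ → X) : Prop :=
  Bornologous Z1 V f ∧ Bornologous Z1 V g ∧
  (∀ z : ℤ, z < z₀ → g z = f z) ∧ g z₀ = x₀ ∧ (∀ z : ℤ, z₀ < z → g z = f (z - 1)) ∧
  TailCond V f

/-- One step of the relation generating `≃_d`. -/
def StepD {X : Type u} (V : Set (Set (X × X))) (f g : ℤ → X) : Prop :=
  (∃ z₀ : ℤ, DeleteRel V z₀ f g) ∨ (∃ z₀ : ℤ, ∃ x₀ : X, AddRel V z₀ x₀ f g)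

/-- The relation `≃_d` on bornologous maps `ℤ₁ → X`. -/
def SimD {X : Type u} (V : Set (Set (X × X))) : (ℤ → X) → (ℤ → X) → Prop :=
  Relation.ReflTransGen (StepD V)

/-- One step of the relation generating `≃` on strings: a `≃_S`-step, a componentwise
`≃_d`-relation, or a componentwise semi-coarse homotopy. -/
def StepFull {X : Type u} (V : Set (Set (X × X))) (F G : List (ℤ → X)) : Prop :=
  StepS V F G ∨ List.Forall₂ (SimD V) F G ∨ List.Forall₂ (SCHomotopic Z1 V) F G

/-- The equivalence relation `≃` on strings. -/
def SimFull {X : Type u} (V : Set (Set (X × X))) : List (ℤ → X) → List (ℤ → X) → Prop :=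
  Relation.ReflTransGen (StepFull V)
/-! ### Auxiliary lemmas -/

section AuxSC

variable {X : Type u} {V : Set (Set (X × X))}

private lemma mem_V_of_diag (hV : IsSemiCoarseStructure V) {s : Set (X × X)}
    (h : s ⊆ Set.diagonal X) : s ∈ V :=
  hV.2.1 _ _ hV.1 h

private lemma union_mem_V (hV : IsSemiCoarseStructure V) {a b : Set (X × X)}
    (ha : a ∈ V) (hb : b ∈ V) : a ∪ b ∈ V :=
  hV.2.2.1 _ _ ha hb

private lemma subset_mem_V (hV : IsSemiCoarseStructure V) {a b : Set (X × X)}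
    (ha : a ∈ V) (h : b ⊆ a) : b ∈ V :=
  hV.2.1 _ _ ha h

private lemma insert_mem_V (hV : IsSemiCoarseStructure V) {p : X × X} {s : Set (X × X)}
    (hp : ({p} : Set (X × X)) ∈ V) (hs : s ∈ V) : insert p s ∈ V := by
  rw [Set.insert_eq]; exact union_mem_V hV hp hs

private lemma diag_singleton_mem_V (hV : IsSemiCoarseStructure V) (x : X) :
    ({(x, x)} : Set (X × X)) ∈ V := by
  refine mem_V_of_diag hV ?_
  rintro p hp
  rw [Set.mem_singleton_iff] at hp
  subst hp; rfl

private lemma swap_singleton_mem_V (hV : IsSemiCoarseStructure V) {x y : X}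
    (h : ({(x, y)} : Set (X × X)) ∈ V) : ({(y, x)} : Set (X × X)) ∈ V := by
  have h2 := hV.2.2.2 _ h
  rwa [Set.image_singleton] at h2

private lemma born_pair {f : ℤ → X} (hf : Bornologous Z1 V f) {a b : ℤ} (h : |b - a| ≤ 1) :
    ({(f a, f b)} : Set (X × X)) ∈ V := by
  have h1 : ({(a, b)} : Set (ℤ × ℤ)) ∈ Z1 := by
    intro p hp
    rw [Set.mem_singleton_iff] at hp
    subst hp; exact h
  have h2 := hf _ h1
  rwa [Set.image_singleton] at h2

private lemma born_of_pairs {g : ℤ → X} {T : Set (X × X)} (hV : IsSemiCoarseStructure V)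
    (hT : T ∈ V) (h : ∀ a b : ℤ, |b - a| ≤ 1 → (g a, g b) ∈ T) : Bornologous Z1 V g := by
  intro A hA
  refine subset_mem_V hV hT ?_
  rintro _ ⟨p, hp, rfl⟩
  exact h p.1 p.2 (hA hp)

private lemma born_comp {f : ℤ → X} (hf : Bornologous Z1 V f) (c : ℤ → ℤ)
    (hc : ∀ a b : ℤ, |b - a| ≤ 1 → |c b - c a| ≤ 1) :
    Bornologous Z1 V (fun z => f (c z)) := by
  intro A hA
  have h2 : ((fun p : ℤ × ℤ => (c p.1, c p.2)) '' A) ∈ Z1 := by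
    rintro _ ⟨p, hp, rfl⟩
    exact hc _ _ (hA hp)
  have h3 := hf _ h2
  rwa [Set.image_image] at h3

/-! #### Periodicity propagation lemmas -/

private lemma desc_left {g : ℤ → X} {M : ℤ} (hper : PeriodicOn g {z : ℤ | z ≤ M})
    {mm : ℤ} {S : Set X} (hS : ∀ z : ℤ, z ≤ mm → g z ∈ S) :
    ∀ z : ℤ, z ≤ M → g z ∈ S := by
  obtain ⟨P, hP, h⟩ := hper
  have key : ∀ k : ℕ, ∀ z : ℤ, z ≤ M → z - mm ≤ k → g z ∈ S := by
    intro k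
    induction k with
    | zero => intro z _ h0; exact hS z (by omega)
    | succ k ih =>
      intro z hz hk
      by_cases hzmm : z ≤ mm
      · exact hS z hzmm
      · have h2 := h (z - P) (show z - P ∈ {z : ℤ | z ≤ M} from by
          simp only [Set.mem_setOf_eq]; omega)
        have h3 : g z = g (z - P) := by
          rw [← h2]; congr 1; omega
        rw [h3]
        exact ih (z - P) (by omega) (by omega)
  intro z hz
  exact key (z - mm).toNat z hz (by omega)

private lemma asc_right {g : ℤ → X} {R : ℤ} (hper : PeriodicOn g {z : ℤ | R ≤ z})
    {nn : ℤ} {S : Set X} (hS : ∀ z : ℤ, nn ≤ z → g z ∈ S) :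
    ∀ z : ℤ, R ≤ z → g z ∈ S := by
  obtain ⟨P, hP, h⟩ := hper
  have key : ∀ k : ℕ, ∀ z : ℤ, R ≤ z → nn - z ≤ k → g z ∈ S := by
    intro k
    induction k with
    | zero => intro z _ h0; exact hS z (by omega)
    | succ k ih =>
      intro z hz hk
      by_cases hznn : nn ≤ z
      · exact hS z hznn
      · have h2 := h z (show z ∈ {z : ℤ | R ≤ z} from hz)
        have h3 : g z = g (z + P) := h2.symm
        rw [h3]
        exact ih (z + P) (by omega) (by omega)
  intro z hz
  exact key (nn - z).toNat z hz (by omega)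

private lemma cross_left {g : ℤ → X} {M : ℤ} (hper : PeriodicOn g {z : ℤ | z ≤ M})
    {nn : ℤ} {S : Set X} (hS : ∀ z : ℤ, nn ≤ z → g z ∈ S) (hnM : nn ≤ M + 1) :
    ∀ z : ℤ, g z ∈ S := by
  obtain ⟨P, hP, h⟩ := hper
  have key : ∀ k : ℕ, ∀ z : ℤ, nn - z ≤ k → g z ∈ S := by
    intro k
    induction k with
    | zero => intro z h0; exact hS z (by omega)
    | succ k ih =>
      intro z hk
      by_cases hznn : nn ≤ z
      · exact hS z hznn
      · have h2 := h z (show z ∈ {z : ℤ | z ≤ M} from by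
          simp only [Set.mem_setOf_eq]; omega)
        have h3 : g z = g (z + P) := h2.symm
        rw [h3]
        exact ih (z + P) (by omega)
  intro z
  exact key (nn - z).toNat z (by omega)

/-! #### Constant maps, homotopies and tail conditions -/

private lemma homotopic_const_on (hV : IsSemiCoarseStructure V) {g : ℤ → X} {s : Set ℤ} {y : X}
    (hc : ∀ z : ℤ, z ∈ s → g z = y) : HomotopicToConstOn V g s := by
  refine ⟨y, fun _ => y, ?_, ⟨0, fun x k _ => ?_⟩, ⟨0, fun x k _ => rfl⟩⟩
  · intro A _
    refine mem_V_of_diag hV ?_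
    rintro _ ⟨p, _, rfl⟩
    rfl
  · exact (hc x x.2).symm

private lemma left_clause_of_const (hV : IsSemiCoarseStructure V) {g : ℤ → X} {c1 : ℤ} {x : X}
    (h1 : ∀ z : ℤ, z ≤ c1 → g z = x) (j : ℤ)
    (hyp : PeriodicOn g {z : ℤ | z ≤ j + 1} ∧
      ∃ k : ℤ, 1 < k ∧ PeriodicOn g {z : ℤ | z ≤ j + k}) :
    HomotopicToConstOn V g {z : ℤ | z ≤ j} := by
  have hx : ∀ z : ℤ, z ≤ j + 1 → g z ∈ {w : X | w = x} :=
    desc_left hyp.1 (fun z hz => h1 z hz)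
  exact homotopic_const_on hV (fun z hz => hx z (le_trans hz (by omega)))

private lemma right_clause_of_const (hV : IsSemiCoarseStructure V) {g : ℤ → X} {c2 : ℤ} {y : X}
    (h2 : ∀ z : ℤ, c2 ≤ z → g z = y) (j : ℤ)
    (hyp : PeriodicOn g {z : ℤ | j - 1 ≤ z} ∧
      ∃ k : ℤ, 1 < k ∧ PeriodicOn g {z : ℤ | j - k ≤ z}) :
    HomotopicToConstOn V g {z : ℤ | j ≤ z} := by
  have hy : ∀ z : ℤ, j - 1 ≤ z → g z ∈ {w : X | w = y} :=
    asc_right hyp.1 (fun z hz => h2 z hz)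
  exact homotopic_const_on hV (fun z hz => hy z (le_trans (by omega) hz))

private lemma tailCondAt_of_consts (hV : IsSemiCoarseStructure V) {g : ℤ → X}
    {c1 c2 : ℤ} {x y : X} (h1 : ∀ z : ℤ, z ≤ c1 → g z = x) (h2 : ∀ z : ℤ, c2 ≤ z → g z = y)
    (j : ℤ) : TailCondAt V g j :=
  ⟨right_clause_of_const hV h2 j, left_clause_of_const hV h1 j⟩

private lemma tailCond_of_consts (hV : IsSemiCoarseStructure V) {g : ℤ → X}
    {c1 c2 : ℤ} {x y : X} (h1 : ∀ z : ℤ, z ≤ c1 → g z = x) (h2 : ∀ z : ℤ, c2 ≤ z → g z = y) :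
    TailCond V g :=
  fun j => tailCondAt_of_consts hV h1 h2 j

/-! #### A restricted version of `SimFull` and framing -/

private def SimX (V : Set (Set (X × X))) : List (ℤ → X) → List (ℤ → X) → Prop :=
  Relation.ReflTransGen (fun F G => StepS V F G ∨ List.Forall₂ (SimD V) F G)

private lemma simx_to_simfull {F G : List (ℤ → X)} (h : SimX V F G) : SimFull V F G :=
  Relation.ReflTransGen.mono (r := fun F G => StepS V F G ∨ List.Forall₂ (SimD V) F G)
    (p := StepFull V) (fun _ _ h' => h'.elim Or.inl (fun h2 => Or.inr (Or.inl h2))) _ _ h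

private lemma delop_frame {F G P S : List (ℤ → X)} (h : DelOp F G) :
    DelOp (P ++ F ++ S) (P ++ G ++ S) := by
  obtain ⟨P', S', u, v, N, e1, e2, hl, hop⟩ := h
  refine ⟨P ++ P', S' ++ S, u, v, N, ?_, ?_, ?_, hop⟩
  · rw [e1]; simp
  · rw [e2]; simp
  · have h2 : (P ++ F ++ S).length = P.length + F.length + S.length := by
      simp only [List.length_append]
    omega

private lemma merge_frame {F G P S : List (ℤ → X)} (h : MergeRel V F G) :
    MergeRel V (P ++ F ++ S) (P ++ G ++ S) := by
  obtain ⟨P', S', u, v, g, x0, N, M, j, e1, e2, h1, h2, h3, h4, h5, h6⟩ := h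
  exact ⟨P ++ P', S' ++ S, u, v, g, x0, N, M, j, by rw [e1]; simp, by rw [e2]; simp,
    h1, h2, h3, h4, h5, h6⟩

private lemma stepx_frame (P S : List (ℤ → X)) {F G : List (ℤ → X)}
    (h : StepS V F G ∨ List.Forall₂ (SimD V) F G) :
    StepS V (P ++ F ++ S) (P ++ G ++ S) ∨ List.Forall₂ (SimD V) (P ++ F ++ S) (P ++ G ++ S) := by
  have hrefl : ∀ l : List (ℤ → X), List.Forall₂ (SimD V) l l :=
    fun l => List.forall₂_same.mpr fun _ _ => Relation.ReflTransGen.refl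
  rcases h with (h | h | h | h) | h
  · exact Or.inl (Or.inl (delop_frame h))
  · exact Or.inl (Or.inr (Or.inl (delop_frame h)))
  · exact Or.inl (Or.inr (Or.inr (Or.inl (merge_frame h))))
  · exact Or.inl (Or.inr (Or.inr (Or.inr (merge_frame h))))
  · exact Or.inr (List.rel_append (List.rel_append (hrefl P) h) (hrefl S))

private lemma simx_frame (P S : List (ℤ → X)) {F G : List (ℤ → X)} (h : SimX V F G) :
    SimX V (P ++ F ++ S) (P ++ G ++ S) := by
  induction h with
  | refl => exact Relation.ReflTransGen.refl
  | tail _ h2 ih => exact ih.tail (stepx_frame P S h2)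

/-! #### The un-merge step -/

private lemma unmerge_step {g u v : ℤ → X} {j : ℤ} {x0 : X}
    (hu1 : ∀ z : ℤ, z ≤ j → u z = g z) (hu2 : ∀ z : ℤ, j ≤ z → u z = x0)
    (hv1 : ∀ z : ℤ, z ≤ j → v z = x0) (hv2 : ∀ z : ℤ, j < z → v z = g z)
    (htc : TailCondAt V g j) : StepS V [g] [u, v] := by
  refine Or.inr (Or.inr (Or.inr ⟨[], [], u, v, g, x0, j, j, j, rfl, rfl, le_refl j, le_refl j,
    fun z hz => hu2 z hz, fun z hz => hv1 z hz, ?_, htc⟩))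
  intro z
  by_cases hz : z ≤ j
  · rw [if_pos hz, hu1 z hz]
  · rw [if_neg hz, hv2 z (by omega)]

/-! #### Midpoints from well-splitness -/

private lemma midpoint_lemma (hV : IsSemiCoarseStructure V) {A B : Set X}
    (hws : WellSplit V A B) {x y : X}
    (hxy : ({(x, y)} : Set (X × X)) ∈ V) (hxA : x ∈ A) (hxB : x ∉ B)
    (hyB : y ∈ B) (hyA : y ∉ A) :
    ∃ m : X, m ∈ A ∧ m ∈ B ∧ ({(x, m)} : Set (X × X)) ∈ V ∧ ({(m, y)} : Set (X × X)) ∈ V := by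
  have hpair : ({(x, y), (x, y)} : Set (X × X)) = {(x, y)} := Set.pair_eq_singleton _
  have h1 : ({(x, y), (x, y)} : Set (X × X)) ∈ V := by rw [hpair]; exact hxy
  have h2 : ({(x, y), (x, y)} : Set (X × X)) ∉ pushoutStruct V A B := by
    rintro ⟨V1, _, V2, _, hs1, hs2, heq⟩
    have hxy2 : (x, y) ∈ V1 ∪ V2 := by
      rw [← heq]; left; rfl
    rcases hxy2 with h | h
    · exact hyA (hs1 h).2
    · exact hxB (hs2 h).1
  have h3 : ({(y, y)} : Set (X × X)) ∈ pushoutStruct V A B := by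
    refine ⟨∅, mem_V_of_diag hV (Set.empty_subset _), {(y, y)}, diag_singleton_mem_V hV y,
      Set.empty_subset _, ?_, (Set.empty_union _).symm⟩
    rintro p hp
    rw [Set.mem_singleton_iff] at hp
    subst hp
    exact ⟨hyB, hyB⟩
  obtain ⟨⟨γ, γ', hγ, _, h0, _, hend, _, _⟩, _⟩ := hws.2.2.2 x y y h1 h2 h3
  have hC : ({(i2p0, i2p1), (i2p1, i2p2)} : Set (I2 × I2)) ∈ subStruct Z1 I2 := by
    rintro _ ⟨p, hp, rfl⟩
    simp only [Set.mem_insert_iff, Set.mem_singleton_iff] at hp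
    rcases hp with rfl | rfl
    · show |((i2p1 : ℤ)) - ((i2p0 : ℤ))| ≤ 1
      norm_num [i2p0, i2p1]
    · show |((i2p2 : ℤ)) - ((i2p1 : ℤ))| ≤ 1
      norm_num [i2p1, i2p2]
  obtain ⟨V1, hV1, V2, hV2, hs1, hs2, heq⟩ := hγ _ hC
  have hxm : (x, γ i2p1) ∈ V1 ∪ V2 := by
    rw [← heq]
    exact ⟨(i2p0, i2p1), Set.mem_insert _ _, by rw [← h0]⟩
  have hmy : (γ i2p1, y) ∈ V1 ∪ V2 := by
    rw [← heq]
    exact ⟨(i2p1, i2p2), Set.mem_insert_of_mem _ rfl, by rw [← hend]⟩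
  have hmA : γ i2p1 ∈ A := by
    rcases hxm with h | h
    · exact (hs1 h).2
    · exact absurd (hs2 h).1 hxB
  have hmB : γ i2p1 ∈ B := by
    rcases hmy with h | h
    · exact absurd (hs1 h).2 hyA
    · exact (hs2 h).1
  have hUV : V1 ∪ V2 ∈ V := union_mem_V hV hV1 hV2
  refine ⟨γ i2p1, hmA, hmB, ?_, ?_⟩
  · refine subset_mem_V hV hUV ?_
    rintro p hp
    rw [Set.mem_singleton_iff] at hp
    subst hp; exact hxm
  · refine subset_mem_V hV hUV ?_
    rintro p hp
    rw [Set.mem_singleton_iff] at hp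
    subst hp; exact hmy

end AuxSC

section MainSC

variable {X : Type u} {V : Set (Set (X × X))}

private abbrev TRel (u v : ℤ → X) : Prop :=
  ∃ N M : ℤ, ∀ k : ℕ, u (N + (k : ℤ)) = v (M - (k : ℤ))

private lemma trel_of_consts {u v : ℤ → X} {x : X} {N0 M0 : ℤ}
    (hu : ∀ z : ℤ, N0 ≤ z → u z = x) (hv : ∀ z : ℤ, z ≤ M0 → v z = x) : TRel u v :=
  ⟨N0, M0, fun k => by rw [hu _ (by omega), hv _ (by omega)]⟩

private lemma fix_cross (hV : IsSemiCoarseStructure V) {f : ℤ → X} (hf : Bornologous Z1 V f)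
    (c : ℤ) {m : X} {S1 S2 : Set X}
    (hc : f c ∈ S1) (hm1 : m ∈ S1) (hm2 : m ∈ S2) (hc1 : f (c + 1) ∈ S2)
    (hxm : ({(f c, m)} : Set (X × X)) ∈ V) (hmx : ({(m, f c)} : Set (X × X)) ∈ V)
    (hmy : ({(m, f (c + 1))} : Set (X × X)) ∈ V)
    (hym : ({(f (c + 1), m)} : Set (X × X)) ∈ V) :
    ∃ u' v' : ℤ → X,
      Bornologous Z1 V u' ∧ Bornologous Z1 V v' ∧
      (∀ z : ℤ, u' z ∈ S1) ∧ (∀ z : ℤ, v' z ∈ S2) ∧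
      TRel u' v' ∧
      SimX V [fun z => f (min (max z c) (c + 1))] [u', v'] ∧
      (∀ z : ℤ, z ≤ c → u' z = f c) ∧ (∀ z : ℤ, c + 2 ≤ z → v' z = f (c + 1)) := by
  have hdx := diag_singleton_mem_V hV (f c)
  have hdm := diag_singleton_mem_V hV m
  have hdy := diag_singleton_mem_V hV (f (c + 1))
  -- the three maps
  set w : ℤ → X := fun z => f (min (max z c) (c + 1)) with hw
  set w' : ℤ → X := fun z => if z ≤ c then f c else if z = c + 1 then m else f (c + 1) with hw'
  set u' : ℤ → X := fun z => if z ≤ c then f c else m with hu'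
  set v' : ℤ → X := fun z => if z ≤ c + 1 then m else f (c + 1) with hv'
  have hbw : Bornologous Z1 V w :=
    born_comp hf _ (fun a b h => by rw [abs_le] at h ⊢; omega)
  -- classification of w'
  have hkey : ∀ z : ℤ, (z ≤ c ∧ w' z = f c) ∨ (z = c + 1 ∧ w' z = m) ∨
      (c + 2 ≤ z ∧ w' z = f (c + 1)) := by
    intro z
    by_cases h1 : z ≤ c
    · exact Or.inl ⟨h1, if_pos h1⟩
    · by_cases h2 : z = c + 1
      · exact Or.inr (Or.inl ⟨h2, by rw [hw']; simp only []; rw [if_neg h1, if_pos h2]⟩)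
      · exact Or.inr (Or.inr ⟨by omega, by rw [hw']; simp only []; rw [if_neg h1, if_neg h2]⟩)
  have hTw : ({(f c, f c), (m, m), (f (c+1), f (c+1)), (f c, m), (m, f c),
      (m, f (c+1)), (f (c+1), m)} : Set (X × X)) ∈ V := by
    refine insert_mem_V hV hdx (insert_mem_V hV hdm (insert_mem_V hV hdy
      (insert_mem_V hV hxm (insert_mem_V hV hmx (insert_mem_V hV hmy hym)))))
  have hbw' : Bornologous Z1 V w' := by
    refine born_of_pairs hV hTw ?_
    intro a b hab
    rw [abs_le] at hab
    rcases hkey a with ⟨ha, ea⟩ | ⟨ha, ea⟩ | ⟨ha, ea⟩ <;>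
      rcases hkey b with ⟨hb, eb⟩ | ⟨hb, eb⟩ | ⟨hb, eb⟩ <;>
      rw [ea, eb] <;>
      first
        | (exfalso; omega)
        | simp [Set.mem_insert_iff]
  have hTu : ({(f c, f c), (m, m), (f c, m), (m, f c)} : Set (X × X)) ∈ V :=
    insert_mem_V hV hdx (insert_mem_V hV hdm (insert_mem_V hV hxm hmx))
  have hkeyu : ∀ z : ℤ, (z ≤ c ∧ u' z = f c) ∨ (c + 1 ≤ z ∧ u' z = m) := by
    intro z
    by_cases h1 : z ≤ c
    · exact Or.inl ⟨h1, if_pos h1⟩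
    · exact Or.inr ⟨by omega, if_neg h1⟩
  have hbu' : Bornologous Z1 V u' := by
    refine born_of_pairs hV hTu ?_
    intro a b hab
    rcases hkeyu a with ⟨ha, ea⟩ | ⟨ha, ea⟩ <;> rcases hkeyu b with ⟨hb, eb⟩ | ⟨hb, eb⟩ <;>
      rw [ea, eb] <;> simp [Set.mem_insert_iff]
  have hTv : ({(m, m), (f (c+1), f (c+1)), (m, f (c+1)), (f (c+1), m)} : Set (X × X)) ∈ V :=
    insert_mem_V hV hdm (insert_mem_V hV hdy (insert_mem_V hV hmy hym))
  have hkeyv : ∀ z : ℤ, (z ≤ c + 1 ∧ v' z = m) ∨ (c + 2 ≤ z ∧ v' z = f (c + 1)) := by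
    intro z
    by_cases h1 : z ≤ c + 1
    · exact Or.inl ⟨h1, if_pos h1⟩
    · exact Or.inr ⟨by omega, if_neg h1⟩
  have hbv' : Bornologous Z1 V v' := by
    refine born_of_pairs hV hTv ?_
    intro a b hab
    rcases hkeyv a with ⟨ha, ea⟩ | ⟨ha, ea⟩ <;> rcases hkeyv b with ⟨hb, eb⟩ | ⟨hb, eb⟩ <;>
      rw [ea, eb] <;> simp [Set.mem_insert_iff]
  -- constant-tail facts for w and w'
  have hwl : ∀ z : ℤ, z ≤ c → w z = f c := by
    intro z hz; show f _ = f c; congr 1; omega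
  have hwr : ∀ z : ℤ, c + 1 ≤ z → w z = f (c + 1) := by
    intro z hz; show f _ = f (c + 1); congr 1; omega
  have hw'l : ∀ z : ℤ, z ≤ c → w' z = f c := fun z hz => if_pos hz
  have hw'r : ∀ z : ℤ, c + 2 ≤ z → w' z = f (c + 1) := by
    intro z hz
    rcases hkey z with ⟨h, e⟩ | ⟨h, e⟩ | ⟨h, e⟩
    · omega
    · omega
    · exact e
  have hw'm : w' (c + 1) = m := by
    rcases hkey (c + 1) with ⟨h, e⟩ | ⟨h, e⟩ | ⟨h, e⟩
    · omega
    · exact e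
    · omega
  -- the add-a-point step
  have haddrel : AddRel V (c + 1) m w w' := by
    refine ⟨hbw, hbw', ?_, hw'm, ?_, tailCond_of_consts hV hwl hwr⟩
    · intro z hz
      rw [hw'l z (by omega), hwl z (by omega)]
    · intro z hz
      rw [hw'r z (by omega)]
      show f (c + 1) = f _
      congr 1; omega
  have hstep1 : List.Forall₂ (SimD V) [w] [w'] :=
    List.Forall₂.cons (Relation.ReflTransGen.single (Or.inr ⟨c + 1, m, haddrel⟩))
      List.Forall₂.nil
  -- the un-merge step
  have hu'l : ∀ z : ℤ, z ≤ c → u' z = f c := fun z hz => if_pos hz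
  have hu'r : ∀ z : ℤ, c + 1 ≤ z → u' z = m := by
    intro z hz
    rcases hkeyu z with ⟨h, e⟩ | ⟨h, e⟩
    · omega
    · exact e
  have hv'l : ∀ z : ℤ, z ≤ c + 1 → v' z = m := fun z hz => if_pos hz
  have hv'r : ∀ z : ℤ, c + 2 ≤ z → v' z = f (c + 1) := by
    intro z hz
    rcases hkeyv z with ⟨h, e⟩ | ⟨h, e⟩
    · omega
    · exact e
  have hstep2 : StepS V [w'] [u', v'] := by
    refine unmerge_step (x0 := m) ?_ (fun z hz => hu'r z hz) (fun z hz => hv'l z hz) ?_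
      (tailCondAt_of_consts hV hw'l hw'r (c + 1))
    · intro z hz
      by_cases h1 : z ≤ c
      · rw [hu'l z h1, hw'l z h1]
      · have hz1 : z = c + 1 := by omega
        rw [hz1, hw'm, hu'r (c + 1) (by omega)]
    · intro z hz
      rw [hv'r z (by omega), hw'r z (by omega)]
  refine ⟨u', v', hbu', hbv', ?_, ?_, ?_, ?_, hu'l, hv'r⟩
  · intro z
    rcases hkeyu z with ⟨_, e⟩ | ⟨_, e⟩ <;> rw [e]
    exacts [hc, hm1]
  · intro z
    rcases hkeyv z with ⟨_, e⟩ | ⟨_, e⟩ <;> rw [e]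
    exacts [hm2, hc1]
  · exact trel_of_consts (x := m) (N0 := c + 1) (M0 := c + 1) hu'r hv'l
  · exact Relation.ReflTransGen.head (Or.inr hstep1)
      (Relation.ReflTransGen.single (Or.inl hstep2))

private lemma fix_lemma (hV : IsSemiCoarseStructure V) {A B : Set X} (hws : WellSplit V A B)
    {f : ℤ → X} (hf : Bornologous Z1 V f) (c : ℤ) :
    ∃ g0 : ℤ → X, ∃ t0 : List (ℤ → X),
      (∀ u ∈ g0 :: t0, Bornologous Z1 V u) ∧
      (∀ u ∈ g0 :: t0, (∀ z : ℤ, u z ∈ A) ∨ (∀ z : ℤ, u z ∈ B)) ∧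
      List.Chain' TRel (g0 :: t0) ∧
      SimX V [fun z => f (min (max z c) (c + 1))] (g0 :: t0) ∧
      (∀ z : ℤ, z ≤ c → g0 z = f c) ∧
      (∀ u ∈ (g0 :: t0).getLast?, ∀ z : ℤ, c + 2 ≤ z → u z = f (c + 1)) := by
  have hcover : ∀ x : X, x ∈ A ∨ x ∈ B := by
    intro x
    have h : x ∈ A ∪ B := by rw [hws.2.2.1]; trivial
    exact h
  have hsingle : ∀ S : Set X, f c ∈ S → f (c + 1) ∈ S →
      ∃ g0 : ℤ → X, ∃ t0 : List (ℤ → X),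
      (∀ u ∈ g0 :: t0, Bornologous Z1 V u) ∧
      (∀ u ∈ g0 :: t0, (∀ z : ℤ, u z ∈ S) ∨ False) ∧
      List.Chain' TRel (g0 :: t0) ∧
      SimX V [fun z => f (min (max z c) (c + 1))] (g0 :: t0) ∧
      (∀ z : ℤ, z ≤ c → g0 z = f c) ∧
      (∀ u ∈ (g0 :: t0).getLast?, ∀ z : ℤ, c + 2 ≤ z → u z = f (c + 1)) := by
    intro S h1 h2
    refine ⟨(fun z => f (min (max z c) (c + 1))), [], ?_, ?_, List.isChain_singleton _,
      Relation.ReflTransGen.refl, ?_, ?_⟩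
    · intro u hu
      rw [List.mem_singleton] at hu
      subst hu
      exact born_comp hf _ (fun a b h => by rw [abs_le] at h ⊢; omega)
    · intro u hu
      rw [List.mem_singleton] at hu
      subst hu
      left
      intro z
      show f (min (max z c) (c + 1)) ∈ S
      have h3 : min (max z c) (c + 1) = c ∨ min (max z c) (c + 1) = c + 1 := by omega
      rcases h3 with h3 | h3 <;> rw [h3]
      exacts [h1, h2]
    · intro z hz; show f _ = f c; congr 1; omega
    · intro u hu z hz
      simp only [List.getLast?_singleton, Option.mem_def, Option.some.injEq] at hu
      subst hu
      show f _ = f (c + 1); congr 1; omega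
  by_cases h1 : f c ∈ A ∧ f (c + 1) ∈ A
  · obtain ⟨g0, t0, hb, hab, hch, hs, hh, hl⟩ := hsingle A h1.1 h1.2
    exact ⟨g0, t0, hb, fun u hu => Or.inl ((hab u hu).resolve_right (fun h => h.elim)),
      hch, hs, hh, hl⟩
  by_cases h2 : f c ∈ B ∧ f (c + 1) ∈ B
  · obtain ⟨g0, t0, hb, hab, hch, hs, hh, hl⟩ := hsingle B h2.1 h2.2
    exact ⟨g0, t0, hb, fun u hu => Or.inr ((hab u hu).resolve_right (fun h => h.elim)),
      hch, hs, hh, hl⟩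
  · have hor : (f c ∈ A ∧ f c ∉ B ∧ f (c+1) ∈ B ∧ f (c+1) ∉ A) ∨
        (f c ∈ B ∧ f c ∉ A ∧ f (c+1) ∈ A ∧ f (c+1) ∉ B) := by
      have h3 := hcover (f c)
      have h4 := hcover (f (c + 1))
      tauto
    rcases hor with ⟨ha1, ha2, ha3, ha4⟩ | ⟨ha1, ha2, ha3, ha4⟩
    · obtain ⟨m, hmA, hmB, hxm, hmy⟩ := midpoint_lemma hV hws
        (born_pair hf (a := c) (b := c + 1) (by rw [abs_le]; omega)) ha1 ha2 ha3 ha4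
      obtain ⟨u', v', hbu, hbv, hu1, hv1, hrel, hsim, hhead, hlast⟩ :=
        fix_cross hV hf c (S1 := A) (S2 := B) ha1 hmA hmB ha3
          hxm (swap_singleton_mem_V hV hxm) hmy (swap_singleton_mem_V hV hmy)
      refine ⟨u', [v'], ?_, ?_, List.isChain_pair.mpr hrel, hsim, hhead, ?_⟩
      · intro u hu
        rcases List.mem_cons.mp hu with rfl | hu
        · exact hbu
        · rw [List.mem_singleton] at hu; subst hu; exact hbv
      · intro u hu
        rcases List.mem_cons.mp hu with rfl | hu
        · exact Or.inl hu1
        · rw [List.mem_singleton] at hu; subst hu; exact Or.inr hv1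
      · intro u hu
        simp only [List.getLast?_cons_cons, List.getLast?_singleton, Option.mem_def,
          Option.some.injEq] at hu
        subst hu
        exact hlast
    · obtain ⟨m, hmA, hmB, hym, hmx⟩ := midpoint_lemma hV hws
        (born_pair hf (a := c + 1) (b := c) (by rw [abs_le]; omega)) ha3 ha4 ha1 ha2
      obtain ⟨u', v', hbu, hbv, hu1, hv1, hrel, hsim, hhead, hlast⟩ :=
        fix_cross hV hf c (S1 := B) (S2 := A) ha1 hmB hmA ha3
          (swap_singleton_mem_V hV hmx) hmx (swap_singleton_mem_V hV hym) hym
      refine ⟨u', [v'], ?_, ?_, List.isChain_pair.mpr hrel, hsim, hhead, ?_⟩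
      · intro u hu
        rcases List.mem_cons.mp hu with rfl | hu
        · exact hbu
        · rw [List.mem_singleton] at hu; subst hu; exact hbv
      · intro u hu
        rcases List.mem_cons.mp hu with rfl | hu
        · exact Or.inr hu1
        · rw [List.mem_singleton] at hu; subst hu; exact Or.inl hv1
      · intro u hu
        simp only [List.getLast?_cons_cons, List.getLast?_singleton, Option.mem_def,
          Option.some.injEq] at hu
        subst hu
        exact hlast

private lemma rec_lemma (hV : IsSemiCoarseStructure V) {A B : Set X} (hws : WellSplit V A B)
    {f : ℤ → X} (hf : Bornologous Z1 V f) {n0 : ℤ}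
    (hn0mem : (∀ z : ℤ, n0 ≤ z → f z ∈ A) ∨ (∀ z : ℤ, n0 ≤ z → f z ∈ B))
    (hn0min : ∀ z : ℤ, ((∀ w : ℤ, z ≤ w → f w ∈ A) ∨ (∀ w : ℤ, z ≤ w → f w ∈ B)) → n0 ≤ z) :
    ∀ n : ℕ, ∀ c : ℤ, c + (n : ℤ) = n0 →
      ∃ g0 : ℤ → X, ∃ t0 : List (ℤ → X),
        (∀ u ∈ g0 :: t0, Bornologous Z1 V u) ∧
        (∀ u ∈ g0 :: t0, (∀ z : ℤ, u z ∈ A) ∨ (∀ z : ℤ, u z ∈ B)) ∧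
        List.Chain' TRel (g0 :: t0) ∧
        SimX V [fun z => f (max z c)] (g0 :: t0) ∧
        (∀ z : ℤ, z ≤ c → g0 z = f c) := by
  intro n
  induction n with
  | zero =>
    intro c hc
    push_cast at hc
    refine ⟨(fun z => f (max z c)), [], ?_, ?_, List.isChain_singleton _,
      Relation.ReflTransGen.refl, ?_⟩
    · intro u hu
      rw [List.mem_singleton] at hu
      subst hu
      exact born_comp hf _ (fun a b h => by rw [abs_le] at h ⊢; omega)
    · intro u hu
      rw [List.mem_singleton] at hu
      subst hu
      rcases hn0mem with h | h
      · exact Or.inl (fun z => h _ (by omega))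
      · exact Or.inr (fun z => h _ (by omega))
    · intro z hz; show f _ = f c; congr 1; omega
  | succ n ih =>
    intro c hc
    push_cast at hc
    have hcn : c < n0 := by omega
    have htc : TailCondAt V (fun z => f (max z c)) (c + 1) := by
      constructor
      · rintro ⟨⟨P, hP, hper⟩, -⟩
        exfalso
        have hperf : PeriodicOn f {z : ℤ | c ≤ z} := by
          refine ⟨P, hP, ?_⟩
          intro z hz
          simp only [Set.mem_setOf_eq] at hz
          have h2 : f (max (z + P) c) = f (max z c) :=
            hper z (by simp only [Set.mem_setOf_eq]; omega)
          rw [show max (z + P) c = z + P from by omega,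
            show max z c = z from by omega] at h2
          exact h2
        rcases hn0mem with h | h
        · exact absurd (hn0min c (Or.inl (asc_right hperf h))) (by omega)
        · exact absurd (hn0min c (Or.inr (asc_right hperf h))) (by omega)
      · exact left_clause_of_const hV (c1 := c)
          (fun z hz => by show f _ = f c; congr 1; omega) (c + 1)
    have step1 : StepS V [fun z => f (max z c)]
        [(fun z => f (min (max z c) (c + 1))), (fun z => f (max z (c + 1)))] :=
      unmerge_step (x0 := f (c + 1))
        (fun z hz => by show f _ = f _; congr 1; omega)
        (fun z hz => by show f _ = f _; congr 1; omega)
        (fun z hz => by show f _ = f _; congr 1; omega)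
        (fun z hz => by show f _ = f _; congr 1; omega) htc
    obtain ⟨g0, t0, hFborn, hFAB, hFchain, hFsim, hFhead, hFlast⟩ := fix_lemma hV hws hf c
    obtain ⟨g1, t1, hRborn, hRAB, hRchain, hRsim, hRhead⟩ := ih (c + 1) (by omega)
    refine ⟨g0, t0 ++ g1 :: t1, ?_, ?_, ?_, ?_, hFhead⟩
    · intro u hu
      rcases List.mem_cons.mp hu with rfl | hu
      · exact hFborn _ (by simp)
      · rcases List.mem_append.mp hu with hu | hu
        · exact hFborn _ (by simp [hu])
        · exact hRborn _ hu
    · intro u hu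
      rcases List.mem_cons.mp hu with rfl | hu
      · exact hFAB _ (by simp)
      · rcases List.mem_append.mp hu with hu | hu
        · exact hFAB _ (by simp [hu])
        · exact hRAB _ hu
    · have hlink : ∀ x ∈ (g0 :: t0).getLast?, ∀ y ∈ (g1 :: t1).head?, TRel x y := by
        intro x hx y hy
        simp only [List.head?_cons, Option.mem_def, Option.some.injEq] at hy
        subst hy
        exact trel_of_consts (x := f (c + 1)) (N0 := c + 2) (M0 := c + 1)
          (hFlast x hx) (fun z hz => hRhead z hz)
      have hch := List.IsChain.append hFchain hRchain hlink
      rwa [List.cons_append] at hch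
    · have s1 : SimX V [fun z => f (max z c)]
          [(fun z => f (min (max z c) (c + 1))), (fun z => f (max z (c + 1)))] :=
        Relation.ReflTransGen.single (Or.inl step1)
      have s2 := simx_frame [] [fun z => f (max z (c + 1))] hFsim
      have s3 := simx_frame (g0 :: t0) [] hRsim
      simp only [List.nil_append, List.append_nil] at s2 s3
      have s4 := (s1.trans s2).trans s3
      simpa [SimX] using s4

end MainSC

/-- (Semi-coarse Lebesgue covering lemma.) If `A, B` well-split `X` and the
tails of a bornologous `f : ℤ₁ → X` land in `A` or `B`, then `(f)` is `≃`-equivalent to a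
string each of whose members has image in `A` or in `B`, with the right tail of each member
equal to the left tail of the next. -/
theorem lebesgue_covering_semiCoarse {X : Type u}
    (V : Set (Set (X × X))) (hV : IsSemiCoarseStructure V)
    (A B : Set X) (hws : WellSplit V A B)
    (f : ℤ → X) (hf : Bornologous Z1 V f)
    (hL : ∃ m : ℤ, (∀ z : ℤ, z ≤ m → f z ∈ A) ∨ (∀ z : ℤ, z ≤ m → f z ∈ B))
    (hR : ∃ n : ℤ, (∀ z : ℤ, n ≤ z → f z ∈ A) ∨ (∀ z : ℤ, n ≤ z → f z ∈ B)) :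
    ∃ L : List (ℤ → X), L ≠ [] ∧
      (∀ u ∈ L, Bornologous Z1 V u) ∧
      (∀ u ∈ L, (∀ z : ℤ, u z ∈ A) ∨ (∀ z : ℤ, u z ∈ B)) ∧
      List.Chain' (fun u v : ℤ → X => ∃ N M : ℤ, ∀ k : ℕ, u (N + (k : ℤ)) = v (M - (k : ℤ))) L ∧
      SimFull V [f] L := by

  classical
  by_cases htriv : (∀ z : ℤ, f z ∈ A) ∨ (∀ z : ℤ, f z ∈ B)
  · refine ⟨[f], by simp, ?_, ?_, List.isChain_singleton _, Relation.ReflTransGen.refl⟩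
    · intro u hu
      rw [List.mem_singleton] at hu
      subst hu
      exact hf
    · intro u hu
      rw [List.mem_singleton] at hu
      subst hu
      exact htriv
  · have hexA : ∃ z : ℤ, f z ∉ A := by
      by_contra h
      push_neg at h
      exact htriv (Or.inl h)
    have hexB : ∃ z : ℤ, f z ∉ B := by
      by_contra h
      push_neg at h
      exact htriv (Or.inr h)
    obtain ⟨a0, ha0⟩ := hexA
    obtain ⟨b0, hb0⟩ := hexB
    have hm1 : a0 ≤ max a0 b0 := le_max_left _ _
    have hm2 : b0 ≤ max a0 b0 := le_max_right _ _
    have hm3 : min a0 b0 ≤ a0 := min_le_left _ _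
    have hm4 : min a0 b0 ≤ b0 := min_le_right _ _
    have hMb : ∀ z : ℤ, ((∀ w : ℤ, w ≤ z → f w ∈ A) ∨ (∀ w : ℤ, w ≤ z → f w ∈ B)) →
        z ≤ max a0 b0 := by
      intro z hz
      rcases hz with h | h
      · by_contra hcon
        exact ha0 (h a0 (by omega))
      · by_contra hcon
        exact hb0 (h b0 (by omega))
    obtain ⟨m0, hm0mem, hm0max⟩ := Int.exists_greatest_of_bdd ⟨max a0 b0, hMb⟩ hL
    have hNb : ∀ z : ℤ, ((∀ w : ℤ, z ≤ w → f w ∈ A) ∨ (∀ w : ℤ, z ≤ w → f w ∈ B)) →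
        min a0 b0 ≤ z := by
      intro z hz
      rcases hz with h | h
      · by_contra hcon
        exact ha0 (h a0 (by omega))
      · by_contra hcon
        exact hb0 (h b0 (by omega))
    obtain ⟨n0, hn0mem, hn0min⟩ := Int.exists_least_of_bdd ⟨min a0 b0, hNb⟩ hR
    set c0 : ℤ := min m0 n0 with hc0def
    have hc0m : c0 ≤ m0 := min_le_left _ _
    have hc0n : c0 ≤ n0 := min_le_right _ _
    have htcf : TailCondAt V f c0 := by
      constructor
      · rintro ⟨hper, -⟩
        exfalso
        rcases hn0mem with h | h
        · exact absurd (hn0min (c0 - 1) (Or.inl (asc_right hper h))) (by omega)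
        · exact absurd (hn0min (c0 - 1) (Or.inr (asc_right hper h))) (by omega)
      · rintro ⟨hper, -⟩
        exfalso
        rcases le_or_gt m0 n0 with hmn | hmn
        · have hc0m0 : c0 = m0 := min_eq_left hmn
          rcases hm0mem with h | h
          · exact absurd (hm0max (m0 + 1)
              (Or.inl (fun z hz => desc_left hper h z (by omega)))) (by omega)
          · exact absurd (hm0max (m0 + 1)
              (Or.inr (fun z hz => desc_left hper h z (by omega)))) (by omega)
        · have hc0n0 : c0 = n0 := min_eq_right (by omega)
          rcases hn0mem with h | h
          · exact ha0 (cross_left hper h (by omega) a0)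
          · exact hb0 (cross_left hper h (by omega) b0)
    have step0 : StepS V [f] [(fun z => f (min z c0)), (fun z => f (max z c0))] :=
      unmerge_step (x0 := f c0)
        (fun z hz => by show f _ = f _; congr 1; omega)
        (fun z hz => by show f _ = f _; congr 1; omega)
        (fun z hz => by show f _ = f _; congr 1; omega)
        (fun z hz => by show f _ = f _; congr 1; omega) htcf
    obtain ⟨g1, t1, hRborn, hRAB, hRchain, hRsim, hRhead⟩ :=
      rec_lemma hV hws hf hn0mem hn0min (n0 - c0).toNat c0 (by omega)
    refine ⟨(fun z => f (min z c0)) :: g1 :: t1, by simp, ?_, ?_, ?_, ?_⟩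
    · intro u hu
      rcases List.mem_cons.mp hu with rfl | hu
      · exact born_comp hf _ (fun a b h => by rw [abs_le] at h ⊢; omega)
      · exact hRborn u hu
    · intro u hu
      rcases List.mem_cons.mp hu with rfl | hu
      · rcases hm0mem with h | h
        · exact Or.inl (fun z => h _ (by omega))
        · exact Or.inr (fun z => h _ (by omega))
      · exact hRAB u hu
    · refine List.isChain_cons.mpr ⟨?_, hRchain⟩
      intro y hy
      simp only [List.head?_cons, Option.mem_def, Option.some.injEq] at hy
      subst hy
      exact trel_of_consts (u := fun z => f (min z c0)) (v := g1) (x := f c0)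
        (N0 := c0) (M0 := c0)
        (fun z hz => by show f _ = f _; congr 1; omega) (fun z hz => hRhead z hz)
    · have s1 : SimX V [f] [(fun z => f (min z c0)), (fun z => f (max z c0))] :=
        Relation.ReflTransGen.single (Or.inl step0)
      have s2 := simx_frame [fun z => f (min z c0)] [] hRsim
      simp only [List.append_nil] at s2
      exact simx_to_simfull (s1.trans (by simpa [SimX] using s2))
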